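/- arXiv:2110.15015 — 6 statements merged into one kernel-verified Lean document; each statement's English description precedes it below -/
import Mathlib

section
/- Let d = (d_1, ..., d_n) be a degree sequence with M_k = Σ_{i=1}^n [d_i]_k (falling factorial moments), and let G be a multigraph realizing d with m_t light triple-edges, m_d light double-edges, and m_l light single loops, and no other non-simple edges. Let h be the number of heavy nodes, d_h the h-th largest degree, and L_2 = M_2 - H_2 where H_2 = Σ_{i=1}^h [d_i]_2. Then the number of light simple ordered two-stars in G (ordered triples (v_1, v_2, v_3) with v_1 light, v_1v_2 and v_1v_3 simple edges, v_2 ≠ v_3) is at least L_2 - 12·m_t·d_h - 8·m_d·d_h - m_l·d_h². -/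
open Finset

/-- A multigraph on `n` nodes, given by a symmetric multiplicity function.
`mult i i` is the multiplicity of the loop at `i`. -/
structure Multigraph (n : ℕ) where
  mult : Fin n → Fin n → ℕ
  symm : ∀ i j, mult i j = mult j i

namespace Multigraph

/-- The degree of a node: a loop counts twice. -/
def deg {n : ℕ} (G : Multigraph n) (i : Fin n) : ℕ :=
  2 * G.mult i i + ∑ j ∈ Finset.univ.filter (fun j => j ≠ i), G.mult i j

/-- `i j` is a simple edge: non-loop of multiplicity exactly 1. -/
def Simple {n : ℕ} (G : Multigraph n) (i j : Fin n) : Prop :=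
  i ≠ j ∧ G.mult i j = 1

instance {n : ℕ} (G : Multigraph n) (i j : Fin n) : Decidable (G.Simple i j) :=
  inferInstanceAs (Decidable (i ≠ j ∧ G.mult i j = 1))

end Multigraph

/-- The (0-indexed) degree sequence extended to all of `ℕ` by zero. -/
def dExt (n : ℕ) (d : Fin n → ℕ) (i : ℕ) : ℕ :=
  if h : i < n then d ⟨i, h⟩ else 0

/-!
At a light node `i` write `d i = s + 3 t + 2 b + 2 l`, where `s`, `t`, `b` count the simple,
triple and double edges at `i` and `l ≤ 1` is its loop. The simple ordered two-stars centred at `i`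
number `[s]_2`, and `[d i]_2 - [s]_2 = (d i - s) (d i + s - 1)` with `d i + s - 1 < 2 d_h`, which is
at most `6 t d_h + 4 b d_h + l d_h²`. Summing over the light nodes, every light multi-edge is
counted at most once from each of its two endpoints.
-/

lemma Finset.sum_card_filter_eq_card_filter_prod {α β : Type*} [Fintype α] [DecidableEq α]
    [Fintype β] (s : Finset α) (P : α → β → Prop) [∀ a, DecidablePred (P a)] :
    ∑ a ∈ s, #{b | P a b} = #{p : α × β | p.1 ∈ s ∧ P p.1 p.2} := by
  rw [card_filter, Fintype.sum_prod_type, ← univ_inter s, ← sum_ite_mem]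
  refine sum_congr rfl fun a _ => ?_
  by_cases ha : a ∈ s
  · simp only [univ_inter, ha, if_true, true_and, card_filter]
  · simp [ha]

lemma Antitone.le_dExt {n k : ℕ} {d : Fin n → ℕ} (hd : Antitone d) {i : Fin n} (hk : k ≤ i.val) :
    d i ≤ dExt n d k := by
  rw [dExt, dif_pos (hk.trans_lt i.isLt)]
  exact hd (Fin.le_def.mpr hk)

lemma descFactorial_two_le {s t b l D : ℕ} (hl : l ≤ 1) (hD : s + 3 * t + 2 * b + 2 * l ≤ D) :
    (s + 3 * t + 2 * b + 2 * l).descFactorial 2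
      ≤ s.descFactorial 2 + 6 * t * D + 4 * b * D + l * D ^ 2 := by
  have hl : l = 0 ∨ l = 1 := by omega
  zify [Nat.cast_descFactorial_two] at hD ⊢
  have he : (0 : ℤ) ≤ 3 * t + 2 * b := by positivity
  rcases hl with rfl | rfl
  · push_cast at hD ⊢
    nlinarith [mul_nonneg he (show (0 : ℤ) ≤ D - s - (3 * t + 2 * b) by linarith)]
  · push_cast at hD ⊢
    nlinarith [mul_nonneg he (show (0 : ℤ) ≤ D - s - (3 * t + 2 * b) - 2 by linarith),
      sq_nonneg ((D : ℤ) - 2)]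

namespace Multigraph

variable {n : ℕ} (G : Multigraph n)

def nbrsOfMult (i : Fin n) (k : ℕ) : Finset (Fin n) := {j | j ≠ i ∧ G.mult i j = k}

lemma simple_iff_mem_nbrsOfMult_one {i j : Fin n} : G.Simple i j ↔ j ∈ G.nbrsOfMult i 1 := by
  simp [Simple, nbrsOfMult, ne_comm]

lemma deg_eq_sum_range {i : Fin n} {K : ℕ} (hK : ∀ j ≠ i, G.mult i j ≤ K) :
    G.deg i = 2 * G.mult i i + ∑ k ∈ range (K + 1), k * #(G.nbrsOfMult i k) := by
  rw [deg, ← sum_fiberwise_of_maps_to (g := G.mult i) (t := range (K + 1))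
    fun j hj => mem_range_succ_iff.mpr (hK j (by simpa using hj))]
  congr 1
  refine sum_congr rfl fun k _ => ?_
  rw [sum_const_nat fun j hj => (mem_filter.mp hj).2, mul_comm, nbrsOfMult, filter_filter]

lemma deg_eq_of_mult_le_three {i : Fin n} (hmax : ∀ j ≠ i, G.mult i j ≤ 3) :
    G.deg i = #(G.nbrsOfMult i 1) + 3 * #(G.nbrsOfMult i 3) + 2 * #(G.nbrsOfMult i 2)
      + 2 * G.mult i i := by
  rw [G.deg_eq_sum_range hmax]
  simp only [sum_range_succ, sum_range_zero]
  ring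

lemma descFactorial_deg_le {i : Fin n} {D : ℕ} (hmax : ∀ j ≠ i, G.mult i j ≤ 3)
    (hloop : G.mult i i ≤ 1) (hD : G.deg i ≤ D) :
    (G.deg i).descFactorial 2 ≤ (#(G.nbrsOfMult i 1)).descFactorial 2
      + 6 * #(G.nbrsOfMult i 3) * D + 4 * #(G.nbrsOfMult i 2) * D + G.mult i i * D ^ 2 := by
  rw [G.deg_eq_of_mult_le_three hmax] at hD ⊢
  exact descFactorial_two_le hloop hD

lemma sum_descFactorial_deg_le (P : Fin n → Prop) [DecidablePred P] {D : ℕ}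
    (hmax : ∀ i j, i ≠ j → G.mult i j ≤ 3) (hloop : ∀ i, G.mult i i ≤ 1)
    (hD : ∀ i, P i → G.deg i ≤ D) :
    ∑ i with P i, (G.deg i).descFactorial 2
      ≤ ∑ i with P i, (#(G.nbrsOfMult i 1)).descFactorial 2
        + 6 * (∑ i with P i, #(G.nbrsOfMult i 3)) * D
        + 4 * (∑ i with P i, #(G.nbrsOfMult i 2)) * D + (∑ i with P i, G.mult i i) * D ^ 2 := by
  simp only [mul_sum, sum_mul, ← sum_add_distrib]
  refine sum_le_sum fun i hi => ?_
  exact G.descFactorial_deg_le (fun j hj => hmax i j hj.symm) (hloop i)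
    (hD i (mem_filter.mp hi).2)

lemma card_orderedSimpleTwoStars (i : Fin n) :
    #{q : Fin n × Fin n | q.1 ≠ q.2 ∧ G.Simple i q.1 ∧ G.Simple i q.2}
      = (#(G.nbrsOfMult i 1)).descFactorial 2 := by
  have : ({q : Fin n × Fin n | q.1 ≠ q.2 ∧ G.Simple i q.1 ∧ G.Simple i q.2} : Finset _)
      = (G.nbrsOfMult i 1).offDiag := by
    ext q
    simp only [mem_filter, mem_univ, true_and, mem_offDiag, simple_iff_mem_nbrsOfMult_one]
    tauto
  rw [this, offDiag_card]
  simp [Nat.descFactorial, Nat.mul_sub_one, mul_comm]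

lemma sum_card_nbrsOfMult_le (P : Fin n → Prop) [DecidablePred P] (k : ℕ) :
    ∑ i with P i, #(G.nbrsOfMult i k)
      ≤ #{q : Fin n × Fin n | q.1 ≠ q.2 ∧ G.mult q.1 q.2 = k ∧ (P q.1 ∨ P q.2)} := by
  simp only [nbrsOfMult]
  rw [sum_card_filter_eq_card_filter_prod]
  refine card_le_card fun q hq => ?_
  simp only [mem_filter, mem_univ, true_and] at hq ⊢
  exact ⟨hq.2.1.symm, hq.2.2, .inl hq.1⟩

lemma sum_mult_self_eq_card (P : Fin n → Prop) [DecidablePred P] (hloop : ∀ i, G.mult i i ≤ 1) :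
    ∑ i with P i, G.mult i i = #{i | G.mult i i = 1 ∧ P i} := by
  rw [card_filter, sum_filter]
  refine sum_congr rfl fun i _ => ?_
  rcases Nat.le_one_iff_eq_zero_or_eq_one.mp (hloop i) with h | h <;> simp [h]

end Multigraph

theorem stmt0_general (n h mt md ml : ℕ) (G : Multigraph n) (d : Fin n → ℕ)
    (hdeg : ∀ i, G.deg i = d i)
    (hsorted : ∀ i j : Fin n, i ≤ j → d j ≤ d i)
    -- `mt` light triple-edges (counted as ordered pairs of endpoints, hence `2 * mt`)
    (htriple : (Finset.univ.filter (fun p : Fin n × Fin n =>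
        p.1 ≠ p.2 ∧ G.mult p.1 p.2 = 3 ∧ (h ≤ p.1.val ∨ h ≤ p.2.val))).card = 2 * mt)
    -- `md` light double-edges
    (hdouble : (Finset.univ.filter (fun p : Fin n × Fin n =>
        p.1 ≠ p.2 ∧ G.mult p.1 p.2 = 2 ∧ (h ≤ p.1.val ∨ h ≤ p.2.val))).card = 2 * md)
    -- `ml` light single loops
    (hloop : (Finset.univ.filter (fun i : Fin n =>
        G.mult i i = 1 ∧ h ≤ i.val)).card = ml)
    -- no other non-simple edges
    (hmax : ∀ i j : Fin n, i ≠ j → G.mult i j ≤ 3)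
    (hloopmax : ∀ i : Fin n, G.mult i i ≤ 1) :
    ((∑ i ∈ Finset.univ.filter (fun i : Fin n => h ≤ i.val),
        Nat.descFactorial (d i) 2 : ℕ) : ℤ)
      - 12 * (mt : ℤ) * (dExt n d (h - 1) : ℤ)
      - 8 * (md : ℤ) * (dExt n d (h - 1) : ℤ)
      - (ml : ℤ) * (dExt n d (h - 1) : ℤ) ^ 2
    ≤ ((Finset.univ.filter (fun t : Fin n × Fin n × Fin n =>
        h ≤ t.1.val ∧ t.2.1 ≠ t.2.2 ∧ G.Simple t.1 t.2.1 ∧ G.Simple t.1 t.2.2)).card : ℤ) := by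
  set D := dExt n d (h - 1)
  have hdegD : ∀ i : Fin n, h ≤ i.val → G.deg i ≤ D := fun i hi =>
    hdeg i ▸ Antitone.le_dExt hsorted (by omega)
  have hstars : #{t : Fin n × Fin n × Fin n |
      h ≤ t.1.val ∧ t.2.1 ≠ t.2.2 ∧ G.Simple t.1 t.2.1 ∧ G.Simple t.1 t.2.2}
      = ∑ i with h ≤ i.val, (#(G.nbrsOfMult i 1)).descFactorial 2 := by
    simp only [← G.card_orderedSimpleTwoStars, sum_card_filter_eq_card_filter_prod, mem_filter,
      mem_univ, true_and]
  have key := G.sum_descFactorial_deg_le (h ≤ ·.val) hmax hloopmax hdegD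
  simp only [hdeg, G.sum_mult_self_eq_card _ hloopmax, hloop] at key
  have htriples := (G.sum_card_nbrsOfMult_le (h ≤ ·.val) 3).trans htriple.le
  have hdoubles := (G.sum_card_nbrsOfMult_le (h ≤ ·.val) 2).trans hdouble.le
  rw [hstars]
  zify at key htriples hdoubles ⊢
  linarith [mul_le_mul_of_nonneg_right htriples (Nat.cast_nonneg (α := ℤ) D),
    mul_le_mul_of_nonneg_right hdoubles (Nat.cast_nonneg (α := ℤ) D)]

/-- lower bound on the number of light simple ordered two-stars. -/
theorem stmt0 (n h mt md ml : ℕ) (G : Multigraph n) (d : Fin n → ℕ)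
    (hdeg : ∀ i, G.deg i = d i)
    (hsorted : ∀ i j : Fin n, i ≤ j → d j ≤ d i)
    (hh1 : 1 ≤ h) (hhn : h ≤ n)
    -- `mt` light triple-edges (counted as ordered pairs of endpoints, hence `2 * mt`)
    (htriple : (Finset.univ.filter (fun p : Fin n × Fin n =>
        p.1 ≠ p.2 ∧ G.mult p.1 p.2 = 3 ∧ (h ≤ p.1.val ∨ h ≤ p.2.val))).card = 2 * mt)
    -- `md` light double-edges
    (hdouble : (Finset.univ.filter (fun p : Fin n × Fin n =>
        p.1 ≠ p.2 ∧ G.mult p.1 p.2 = 2 ∧ (h ≤ p.1.val ∨ h ≤ p.2.val))).card = 2 * md)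
    -- `ml` light single loops
    (hloop : (Finset.univ.filter (fun i : Fin n =>
        G.mult i i = 1 ∧ h ≤ i.val)).card = ml)
    -- no other non-simple edges
    (hmax : ∀ i j : Fin n, i ≠ j → G.mult i j ≤ 3)
    (hmultilight : ∀ i j : Fin n, i ≠ j → 2 ≤ G.mult i j → (h ≤ i.val ∨ h ≤ j.val))
    (hloopmax : ∀ i : Fin n, G.mult i i ≤ 1)
    (hlooplight : ∀ i : Fin n, G.mult i i = 1 → h ≤ i.val) :
    ((∑ i ∈ Finset.univ.filter (fun i : Fin n => h ≤ i.val),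
        Nat.descFactorial (d i) 2 : ℕ) : ℤ)
      - 12 * (mt : ℤ) * (dExt n d (h - 1) : ℤ)
      - 8 * (md : ℤ) * (dExt n d (h - 1) : ℤ)
      - (ml : ℤ) * (dExt n d (h - 1) : ℤ) ^ 2
    ≤ ((Finset.univ.filter (fun t : Fin n × Fin n × Fin n =>
        h ≤ t.1.val ∧ t.2.1 ≠ t.2.2 ∧ G.Simple t.1 t.2.1 ∧ G.Simple t.1 t.2.2)).card : ℤ) :=
  stmt0_general n h mt md ml G d hdeg hsorted htriple hdouble hloop hmax hloopmax
end

section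
/- Let G be a multigraph realizing degree sequence d with m_t light triple-edges, m_d light double-edges, and m_l light single loops, and no other non-simple edges. Then the number of simple ordered pairs (v_4, v_5) (i.e., ordered pairs of nodes connected by a simple edge) such that (a) v_4 and v_5 are disjoint from a fixed light simple two-star v_1v_2v_3, and (b) v_2v_4 and v_3v_5 are non-edges, is at least M_1 - 6·m_t - 4·m_d - 2·m_l - 2·A_2 - 4·d_1 - 2·d_h, where A_2 = Σ_{i=1}^{d_1} d_i. -/
open Finset

/-! Each simple ordered pair contributes 1 to the degree sum `M₁`, and since all non-simple
edges are light and of multiplicity at most three, they contribute exactly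
`6 m_t + 4 m_d + 2 m_l`. A simple pair `(v₄, v₅)` fails to be counted only if `v₄` or `v₅` is
one of `v₁, v₂, v₃` (at most `2 (d_h + 2 d_1)` pairs, as `v₁` is light), or `v₄` is a neighbour
of `v₂`, or `v₅` one of `v₃`. A node has at most `d_1` neighbours, and the degrees of any `d_1`
nodes sum to at most `A₂`, which bounds each of the last two kinds. -/

lemma Fin.val_le_of_strictMono {m n : ℕ} {e : Fin m → Fin n} (he : StrictMono e) (k : Fin m) :
    (k : ℕ) ≤ e k := by
  simpa using card_le_card_of_injOn (t := Iio (e k)) e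
    (fun j (hj : j ∈ Iio k) => by simpa using he (by simpa using hj)) he.injective.injOn

lemma Finset.sum_insert_le {ι M : Type*} [DecidableEq ι] [AddCommMonoid M] [PartialOrder M]
    [CanonicallyOrderedAdd M] (f : ι → M) (a : ι) (s : Finset ι) :
    ∑ x ∈ insert a s, f x ≤ f a + ∑ x ∈ s, f x := by
  by_cases ha : a ∈ s
  · rw [insert_eq_of_mem ha]
    exact le_add_self
  · rw [sum_insert ha]

lemma Finset.sum_eq_of_forall_le_three {ι : Type*} (s : Finset ι) (f : ι → ℕ)
    (hf : ∀ x ∈ s, f x ≤ 3) :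
    ∑ x ∈ s, f x = #{x ∈ s | f x = 1} + 2 * #{x ∈ s | f x = 2} + 3 * #{x ∈ s | f x = 3} := by
  simp only [card_filter, mul_sum, ← sum_add_distrib]
  refine sum_congr rfl fun x hx => ?_
  have := hf x hx
  interval_cases f x <;> rfl

section SortedDegrees

variable {n : ℕ} {d : Fin n → ℕ}

lemma le_dExt_of_le (hd : Antitone d) {i : Fin n} {k : ℕ} (hk : k ≤ i) : d i ≤ dExt n d k := by
  have hkn : k < n := hk.trans_lt i.isLt
  simpa [dExt, hkn] using hd (show (⟨k, hkn⟩ : Fin n) ≤ i from hk)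

lemma sum_le_sum_range_dExt (hd : Antitone d) (T : Finset (Fin n)) :
    ∑ i ∈ T, d i ≤ ∑ k ∈ range #T, dExt n d k := by
  set e := T.orderEmbOfFin rfl
  calc ∑ i ∈ T, d i = ∑ k : Fin #T, d (e k) := by
        conv_lhs => rw [← T.map_orderEmbOfFin_univ rfl, sum_map]
        rfl
    _ ≤ ∑ k : Fin #T, dExt n d k :=
        sum_le_sum fun k _ => le_dExt_of_le hd (Fin.val_le_of_strictMono e.strictMono k)
    _ = ∑ k ∈ range #T, dExt n d k := Fin.sum_univ_eq_sum_range _ _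

end SortedDegrees

namespace Multigraph

variable {n : ℕ} (G : Multigraph n)

def neighbors (i : Fin n) : Finset (Fin n) := {j | G.mult i j ≠ 0}

def simplePairs : Finset (Fin n × Fin n) := {p | G.Simple p.1 p.2}

@[simp]
lemma mem_simplePairs {p : Fin n × Fin n} : p ∈ G.simplePairs ↔ G.Simple p.1 p.2 := by
  simp [simplePairs]

def compatiblePairs (v₁ v₂ v₃ : Fin n) : Finset (Fin n × Fin n) :=
  Finset.univ.filter (fun p : Fin n × Fin n =>
    G.Simple p.1 p.2 ∧
    p.1 ≠ v₁ ∧ p.1 ≠ v₂ ∧ p.1 ≠ v₃ ∧ p.2 ≠ v₁ ∧ p.2 ≠ v₂ ∧ p.2 ≠ v₃ ∧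
    G.mult v₂ p.1 = 0 ∧ G.mult v₃ p.2 = 0)

lemma simple_comm {i j : Fin n} : G.Simple i j ↔ G.Simple j i := by
  rw [Simple, Simple, G.symm, ne_comm]

lemma sum_mult_le_deg (i : Fin n) : ∑ j, G.mult i j ≤ G.deg i := by
  rw [deg, filter_ne', ← add_sum_erase _ _ (mem_univ i)]
  omega

lemma card_neighbors_le_deg (i : Fin n) : #(G.neighbors i) ≤ G.deg i :=
  calc #(G.neighbors i) ≤ ∑ j ∈ G.neighbors i, G.mult i j := by
        simpa only [smul_eq_mul, mul_one] using card_nsmul_le_sum (G.neighbors i) _ 1 fun j hj =>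
          Nat.one_le_iff_ne_zero.2 (mem_filter.1 hj).2
    _ ≤ ∑ j, G.mult i j := sum_le_sum_of_subset (subset_univ _)
    _ ≤ G.deg i := G.sum_mult_le_deg i

lemma card_simplePairs_filter_fst_mem_le (T : Finset (Fin n)) :
    #{p ∈ G.simplePairs | p.1 ∈ T} ≤ ∑ i ∈ T, G.deg i := by
  rw [card_eq_sum_card_fiberwise (s := {p ∈ G.simplePairs | p.1 ∈ T}) (t := T) (f := Prod.fst)
    fun p hp => (mem_filter.1 hp).2]
  refine sum_le_sum fun i _ => (card_le_card_of_injOn Prod.snd ?_ ?_).trans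
    (G.card_neighbors_le_deg i)
  · intro p hp
    simp only [coe_filter, simplePairs, neighbors, Set.mem_ofPred_eq, mem_univ, true_and,
      mem_filter] at hp ⊢
    obtain ⟨⟨⟨-, hmult⟩, -⟩, rfl⟩ := hp
    omega
  · intro p hp q hq hpq
    simp only [coe_filter, Set.mem_ofPred_eq] at hp hq
    exact Prod.ext (hp.2.trans hq.2.symm) hpq

lemma card_simplePairs_filter_snd_mem_le (T : Finset (Fin n)) :
    #{p ∈ G.simplePairs | p.2 ∈ T} ≤ ∑ i ∈ T, G.deg i := by
  refine (card_le_card_of_injOn Prod.swap (fun p hp => ?_) Prod.swap_injective.injOn).trans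
    (G.card_simplePairs_filter_fst_mem_le T)
  simp only [coe_filter, simplePairs, mem_filter, mem_univ, true_and, Set.mem_ofPred_eq,
    Prod.fst_swap, Prod.snd_swap] at hp ⊢
  exact ⟨G.simple_comm.1 hp.1, hp.2⟩

lemma sum_deg :
    ∑ i, G.deg i = 2 * ∑ i, G.mult i i + ∑ p ∈ {p : Fin n × Fin n | p.1 ≠ p.2}, G.mult p.1 p.2 := by
  simp only [deg, sum_add_distrib, mul_sum, sum_filter, Fintype.sum_prod_type, ne_comm]

lemma sum_deg_eq_card_simplePairs_add (h mt md ml : ℕ)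
    (htriple : (Finset.univ.filter (fun p : Fin n × Fin n =>
        p.1 ≠ p.2 ∧ G.mult p.1 p.2 = 3 ∧ (h ≤ p.1.val ∨ h ≤ p.2.val))).card = 2 * mt)
    (hdouble : (Finset.univ.filter (fun p : Fin n × Fin n =>
        p.1 ≠ p.2 ∧ G.mult p.1 p.2 = 2 ∧ (h ≤ p.1.val ∨ h ≤ p.2.val))).card = 2 * md)
    (hloop : (Finset.univ.filter (fun i : Fin n =>
        G.mult i i = 1 ∧ h ≤ i.val)).card = ml)
    (hmax : ∀ i j : Fin n, i ≠ j → G.mult i j ≤ 3)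
    (hmultilight : ∀ i j : Fin n, i ≠ j → 2 ≤ G.mult i j → (h ≤ i.val ∨ h ≤ j.val))
    (hloopmax : ∀ i : Fin n, G.mult i i ≤ 1)
    (hlooplight : ∀ i : Fin n, G.mult i i = 1 → h ≤ i.val) :
    ∑ i, G.deg i = #G.simplePairs + 6 * mt + 4 * md + 2 * ml := by
  have hloops : ∑ i, G.mult i i = ml := by
    rw [← hloop, card_filter]
    refine sum_congr rfl fun i _ => ?_
    rcases Nat.le_one_iff_eq_zero_or_eq_one.1 (hloopmax i) with h0 | h1
    · simp [h0]
    · simp [h1, hlooplight i h1]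
  have hsimple : ({p ∈ {p : Fin n × Fin n | p.1 ≠ p.2} | G.mult p.1 p.2 = 1} : Finset _) =
      G.simplePairs := by
    ext p
    simp [Simple]
  have hmulti (k : ℕ) (hk : 2 ≤ k) :
      ({p ∈ {p : Fin n × Fin n | p.1 ≠ p.2} | G.mult p.1 p.2 = k} : Finset _) =
        univ.filter fun p : Fin n × Fin n =>
          p.1 ≠ p.2 ∧ G.mult p.1 p.2 = k ∧ (h ≤ p.1.val ∨ h ≤ p.2.val) := by
    ext p
    simp only [mem_filter, mem_univ, true_and]
    exact ⟨fun ⟨hne, hm⟩ => ⟨hne, hm, hmultilight _ _ hne (hm ▸ hk)⟩, fun hp => ⟨hp.1, hp.2.1⟩⟩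
  rw [sum_deg, hloops, sum_eq_of_forall_le_three _ _ fun p hp => hmax _ _ (mem_filter.1 hp).2,
    hsimple, hmulti 2 le_rfl, hmulti 3 (by norm_num), hdouble, htriple]
  ring

lemma card_simplePairs_le (v₁ v₂ v₃ : Fin n) :
    #G.simplePairs ≤ #(G.compatiblePairs v₁ v₂ v₃)
      + #{p ∈ G.simplePairs | p.1 ∈ ({v₁, v₂, v₃} : Finset _)}
      + #{p ∈ G.simplePairs | p.2 ∈ ({v₁, v₂, v₃} : Finset _)}
      + #{p ∈ G.simplePairs | p.1 ∈ G.neighbors v₂}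
      + #{p ∈ G.simplePairs | p.2 ∈ G.neighbors v₃} := by
  grw [← card_union_le, ← card_union_le, ← card_union_le, ← card_union_le]
  refine card_le_card fun p hp => ?_
  simp only [compatiblePairs, neighbors, mem_union, mem_filter, mem_simplePairs, mem_univ,
    true_and, mem_insert, mem_singleton] at hp ⊢
  tauto

lemma card_neighbors_le_dExt_zero {d : Fin n → ℕ} (hdeg : ∀ i, G.deg i = d i) (hd : Antitone d)
    (v : Fin n) : #(G.neighbors v) ≤ dExt n d 0 :=
  (G.card_neighbors_le_deg v).trans ((hdeg v).trans_le (le_dExt_of_le hd (Nat.zero_le _)))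

lemma sum_deg_neighbors_le {d : Fin n → ℕ} (hdeg : ∀ i, G.deg i = d i) (hd : Antitone d)
    (v : Fin n) :
    ∑ i ∈ G.neighbors v, G.deg i ≤ ∑ k ∈ range (dExt n d 0), dExt n d k :=
  calc ∑ i ∈ G.neighbors v, G.deg i = ∑ i ∈ G.neighbors v, d i := sum_congr rfl fun i _ => hdeg i
    _ ≤ ∑ k ∈ range #(G.neighbors v), dExt n d k := sum_le_sum_range_dExt hd _
    _ ≤ ∑ k ∈ range (dExt n d 0), dExt n d k :=
        sum_le_sum_of_subset (range_subset_range.2 (G.card_neighbors_le_dExt_zero hdeg hd v))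

end Multigraph

theorem stmt1_general (n h mt md ml : ℕ) (G : Multigraph n) (d : Fin n → ℕ)
    (hdeg : ∀ i, G.deg i = d i)
    (hsorted : ∀ i j : Fin n, i ≤ j → d j ≤ d i)
    (htriple : (Finset.univ.filter (fun p : Fin n × Fin n =>
        p.1 ≠ p.2 ∧ G.mult p.1 p.2 = 3 ∧ (h ≤ p.1.val ∨ h ≤ p.2.val))).card = 2 * mt)
    (hdouble : (Finset.univ.filter (fun p : Fin n × Fin n =>
        p.1 ≠ p.2 ∧ G.mult p.1 p.2 = 2 ∧ (h ≤ p.1.val ∨ h ≤ p.2.val))).card = 2 * md)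
    (hloop : (Finset.univ.filter (fun i : Fin n =>
        G.mult i i = 1 ∧ h ≤ i.val)).card = ml)
    (hmax : ∀ i j : Fin n, i ≠ j → G.mult i j ≤ 3)
    (hmultilight : ∀ i j : Fin n, i ≠ j → 2 ≤ G.mult i j → (h ≤ i.val ∨ h ≤ j.val))
    (hloopmax : ∀ i : Fin n, G.mult i i ≤ 1)
    (hlooplight : ∀ i : Fin n, G.mult i i = 1 → h ≤ i.val)
    -- a fixed light simple two-star v₁v₂v₃
    (v1 v2 v3 : Fin n) (hv1 : h ≤ v1.val) :
    ((∑ i : Fin n, d i : ℕ) : ℤ)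
      - 6 * (mt : ℤ) - 4 * (md : ℤ) - 2 * (ml : ℤ)
      - 2 * ((∑ i ∈ Finset.range (dExt n d 0), dExt n d i : ℕ) : ℤ)
      - 4 * (dExt n d 0 : ℤ) - 2 * (dExt n d (h - 1) : ℤ)
    ≤ ((Finset.univ.filter (fun p : Fin n × Fin n =>
        G.Simple p.1 p.2 ∧
        p.1 ≠ v1 ∧ p.1 ≠ v2 ∧ p.1 ≠ v3 ∧ p.2 ≠ v1 ∧ p.2 ≠ v2 ∧ p.2 ≠ v3 ∧
        G.mult v2 p.1 = 0 ∧ G.mult v3 p.2 = 0)).card : ℤ) := by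
  have hd : Antitone d := fun i j hij => hsorted i j hij
  have hM₁ : ∑ i, d i = #G.simplePairs + 6 * mt + 4 * md + 2 * ml := by
    rw [← G.sum_deg_eq_card_simplePairs_add h mt md ml htriple hdouble hloop hmax hmultilight
      hloopmax hlooplight]
    exact sum_congr rfl fun i _ => (hdeg i).symm
  have hstar : ∑ i ∈ {v1, v2, v3}, G.deg i ≤ dExt n d (h - 1) + 2 * dExt n d 0 :=
    calc ∑ i ∈ {v1, v2, v3}, G.deg i ≤ G.deg v1 + (G.deg v2 + G.deg v3) := by
          grw [sum_insert_le, sum_insert_le, sum_singleton]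
      _ ≤ dExt n d (h - 1) + 2 * dExt n d 0 := by
          rw [hdeg, hdeg, hdeg]
          have := le_dExt_of_le hd (show h - 1 ≤ v1 by omega)
          have := le_dExt_of_le hd (i := v2) (Nat.zero_le _)
          have := le_dExt_of_le hd (i := v3) (Nat.zero_le _)
          omega
  have hcover := G.card_simplePairs_le v1 v2 v3
  have hfst := G.card_simplePairs_filter_fst_mem_le {v1, v2, v3}
  have hsnd := G.card_simplePairs_filter_snd_mem_le {v1, v2, v3}
  have hnbr₂ := (G.card_simplePairs_filter_fst_mem_le _).trans (G.sum_deg_neighbors_le hdeg hd v2)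
  have hnbr₃ := (G.card_simplePairs_filter_snd_mem_le _).trans (G.sum_deg_neighbors_le hdeg hd v3)
  change _ ≤ ((#(G.compatiblePairs v1 v2 v3) : ℕ) : ℤ)
  omega

/-- lower bound on the number of simple ordered pairs compatible
with a fixed light simple two-star `v₁v₂v₃`. -/
theorem stmt1 (n h mt md ml : ℕ) (G : Multigraph n) (d : Fin n → ℕ)
    (hdeg : ∀ i, G.deg i = d i)
    (hsorted : ∀ i j : Fin n, i ≤ j → d j ≤ d i)
    (hh1 : 1 ≤ h) (hhn : h ≤ n)
    (htriple : (Finset.univ.filter (fun p : Fin n × Fin n =>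
        p.1 ≠ p.2 ∧ G.mult p.1 p.2 = 3 ∧ (h ≤ p.1.val ∨ h ≤ p.2.val))).card = 2 * mt)
    (hdouble : (Finset.univ.filter (fun p : Fin n × Fin n =>
        p.1 ≠ p.2 ∧ G.mult p.1 p.2 = 2 ∧ (h ≤ p.1.val ∨ h ≤ p.2.val))).card = 2 * md)
    (hloop : (Finset.univ.filter (fun i : Fin n =>
        G.mult i i = 1 ∧ h ≤ i.val)).card = ml)
    (hmax : ∀ i j : Fin n, i ≠ j → G.mult i j ≤ 3)
    (hmultilight : ∀ i j : Fin n, i ≠ j → 2 ≤ G.mult i j → (h ≤ i.val ∨ h ≤ j.val))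
    (hloopmax : ∀ i : Fin n, G.mult i i ≤ 1)
    (hlooplight : ∀ i : Fin n, G.mult i i = 1 → h ≤ i.val)
    -- a fixed light simple two-star v₁v₂v₃
    (v1 v2 v3 : Fin n) (hv1 : h ≤ v1.val)
    (hs12 : G.Simple v1 v2) (hs13 : G.Simple v1 v3) (hne23 : v2 ≠ v3) :
    ((∑ i : Fin n, d i : ℕ) : ℤ)
      - 6 * (mt : ℤ) - 4 * (md : ℤ) - 2 * (ml : ℤ)
      - 2 * ((∑ i ∈ Finset.range (dExt n d 0), dExt n d i : ℕ) : ℤ)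
      - 4 * (dExt n d 0 : ℤ) - 2 * (dExt n d (h - 1) : ℤ)
    ≤ ((Finset.univ.filter (fun p : Fin n × Fin n =>
        G.Simple p.1 p.2 ∧
        p.1 ≠ v1 ∧ p.1 ≠ v2 ∧ p.1 ≠ v3 ∧ p.2 ≠ v1 ∧ p.2 ≠ v2 ∧ p.2 ≠ v3 ∧
        G.mult v2 p.1 = 0 ∧ G.mult v3 p.2 = 0)).card : ℤ) :=
  stmt1_general n h mt md ml G d hdeg hsorted htriple hdouble hloop hmax hmultilight hloopmax
    hlooplight v1 v2 v3 hv1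
end

section
/- Let G be a multigraph realizing degree sequence d with m_t triple-edges and m_d double-edges (and no other non-simple edges). Then the number of simple ordered three-stars in G (ordered 4-tuples (v_1, v_3, v_5, v_7) where v_1v_3, v_1v_5, v_1v_7 are simple edges and v_3, v_5, v_7 are distinct) is at least M_3 - 18·m_t·d_1² - 12·m_d·d_1². -/
open Finset

/- ---------- auxiliary material ---------- -/

lemma desc3_step (m : ℕ) : (m+1).descFactorial 3 ≤ m.descFactorial 3 + 3*(m+1)^2 := by
  match m with
  | 0 => simp [Nat.descFactorial]
  | 1 => simp [Nat.descFactorial]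
  | (j+2) =>
    simp [Nat.descFactorial_succ, Nat.descFactorial_zero, Nat.succ_sub_succ]
    nlinarith [sq_nonneg j]

lemma desc3_diff (s k : ℕ) : (s+k).descFactorial 3 ≤ s.descFactorial 3 + 3*k*(s+k)^2 := by
  induction k with
  | zero => simp
  | succ k ih =>
    have h : s + (k+1) = (s+k)+1 := by ring
    rw [h]
    have h2 : (s+k)^2 ≤ ((s+k)+1)^2 := by nlinarith
    nlinarith [desc3_step (s+k), ih]

lemma sum_ind_mem {α} [Fintype α] [DecidableEq α] (S : Finset α) (c : ℕ) :
    (∑ x : α, if x ∈ S then c else 0) = S.card * c := by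
  rw [Finset.sum_ite_mem, Finset.univ_inter, Finset.sum_const, smul_eq_mul]

lemma triple_count {α} [Fintype α] [DecidableEq α] (S : Finset α) :
    (∑ a : α, ∑ b : α, ∑ c : α,
      if a ∈ S ∧ b ∈ S ∧ c ∈ S ∧ a ≠ b ∧ a ≠ c ∧ b ≠ c then 1 else 0)
      = S.card.descFactorial 3 := by
  have hc : ∀ a b : α,
      (∑ c : α, if a ∈ S ∧ b ∈ S ∧ c ∈ S ∧ a ≠ b ∧ a ≠ c ∧ b ≠ c then 1 else 0)
      = if a ∈ S ∧ b ∈ S ∧ a ≠ b then S.card - 2 else 0 := by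
    intro a b
    by_cases h : a ∈ S ∧ b ∈ S ∧ a ≠ b
    · rw [if_pos h]
      have he : ∀ c : α, (if a ∈ S ∧ b ∈ S ∧ c ∈ S ∧ a ≠ b ∧ a ≠ c ∧ b ≠ c then 1 else 0)
          = if c ∈ (S.erase a).erase b then 1 else 0 := by
        intro c
        refine if_congr ?_ rfl rfl
        rw [Finset.mem_erase, Finset.mem_erase]
        constructor
        · rintro ⟨_, _, h3, _, h5, h6⟩; exact ⟨Ne.symm h6, Ne.symm h5, h3⟩
        · rintro ⟨h1, h2, h3⟩; exact ⟨h.1, h.2.1, h3, h.2.2, Ne.symm h2, Ne.symm h1⟩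
      rw [Finset.sum_congr rfl (fun c _ => he c), sum_ind_mem, mul_one,
        Finset.card_erase_of_mem (Finset.mem_erase.2 ⟨Ne.symm h.2.2, h.2.1⟩),
        Finset.card_erase_of_mem h.1]
      omega
    · rw [if_neg h]
      refine Finset.sum_eq_zero fun c _ => ?_
      rw [if_neg]; tauto
  have hb : ∀ a : α, (∑ b : α, if a ∈ S ∧ b ∈ S ∧ a ≠ b then S.card - 2 else 0)
      = if a ∈ S then (S.card - 1) * (S.card - 2) else 0 := by
    intro a
    by_cases ha : a ∈ S
    · rw [if_pos ha]
      have he : ∀ b : α, (if a ∈ S ∧ b ∈ S ∧ a ≠ b then S.card - 2 else 0)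
          = if b ∈ S.erase a then S.card - 2 else 0 := by
        intro b
        refine if_congr ?_ rfl rfl
        rw [Finset.mem_erase]
        constructor
        · rintro ⟨_, h2, h3⟩; exact ⟨Ne.symm h3, h2⟩
        · rintro ⟨h1, h2⟩; exact ⟨ha, h2, Ne.symm h1⟩
      rw [Finset.sum_congr rfl (fun b _ => he b), sum_ind_mem,
        Finset.card_erase_of_mem ha]
    · rw [if_neg ha]
      refine Finset.sum_eq_zero fun b _ => ?_
      rw [if_neg]; tauto
  calc (∑ a : α, ∑ b : α, ∑ c : α,
      if a ∈ S ∧ b ∈ S ∧ c ∈ S ∧ a ≠ b ∧ a ≠ c ∧ b ≠ c then 1 else 0)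
      = ∑ a : α, if a ∈ S then (S.card - 1) * (S.card - 2) else 0 := by
        refine Finset.sum_congr rfl fun a _ => ?_
        rw [Finset.sum_congr rfl (fun b _ => hc a b), hb a]
    _ = S.card * ((S.card - 1) * (S.card - 2)) := sum_ind_mem _ _
    _ = S.card.descFactorial 3 := by
        simp [Nat.descFactorial_succ, Nat.descFactorial_zero, Nat.sub_zero,
          mul_comm, mul_left_comm, mul_assoc]

/-- number of simple neighbours of `v` -/
def svF {n : ℕ} (G : Multigraph n) (v : Fin n) : ℕ :=
  (Finset.univ.filter (fun j => G.Simple v j)).card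

/-- number of double edges at `v` -/
def bvF {n : ℕ} (G : Multigraph n) (v : Fin n) : ℕ :=
  (Finset.univ.filter (fun j => v ≠ j ∧ G.mult v j = 2)).card

/-- number of triple edges at `v` -/
def tvF {n : ℕ} (G : Multigraph n) (v : Fin n) : ℕ :=
  (Finset.univ.filter (fun j => v ≠ j ∧ G.mult v j = 3)).card

/-- lower bound on the number of simple ordered three-stars. -/
theorem stmt2 (n mt md : ℕ) (G : Multigraph n) (d : Fin n → ℕ)
    (hdeg : ∀ i, G.deg i = d i)
    (hsorted : ∀ i j : Fin n, i ≤ j → d j ≤ d i)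
    -- `mt` triple-edges, `md` double-edges (counted as ordered pairs of endpoints)
    (htriple : (Finset.univ.filter (fun p : Fin n × Fin n =>
        p.1 ≠ p.2 ∧ G.mult p.1 p.2 = 3)).card = 2 * mt)
    (hdouble : (Finset.univ.filter (fun p : Fin n × Fin n =>
        p.1 ≠ p.2 ∧ G.mult p.1 p.2 = 2)).card = 2 * md)
    -- no other non-simple edges: no loops, no multiplicity above 3
    (hnoloop : ∀ i : Fin n, G.mult i i = 0)
    (hmax : ∀ i j : Fin n, i ≠ j → G.mult i j ≤ 3) :
    ((∑ i : Fin n, Nat.descFactorial (d i) 3 : ℕ) : ℤ)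
      - 18 * (mt : ℤ) * (dExt n d 0 : ℤ) ^ 2
      - 12 * (md : ℤ) * (dExt n d 0 : ℤ) ^ 2
    ≤ ((Finset.univ.filter (fun t : Fin n × Fin n × Fin n × Fin n =>
        G.Simple t.1 t.2.1 ∧ G.Simple t.1 t.2.2.1 ∧ G.Simple t.1 t.2.2.2 ∧
        t.2.1 ≠ t.2.2.1 ∧ t.2.1 ≠ t.2.2.2 ∧ t.2.2.1 ≠ t.2.2.2)).card : ℤ) := by
  classical
  set D : ℕ := dExt n d 0 with hDdef
  -- the star count equals ∑ desc3 (svF v)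
  have hstar : ((Finset.univ.filter (fun t : Fin n × Fin n × Fin n × Fin n =>
        G.Simple t.1 t.2.1 ∧ G.Simple t.1 t.2.2.1 ∧ G.Simple t.1 t.2.2.2 ∧
        t.2.1 ≠ t.2.2.1 ∧ t.2.1 ≠ t.2.2.2 ∧ t.2.2.1 ≠ t.2.2.2)).card)
      = ∑ v : Fin n, (svF G v).descFactorial 3 := by
    rw [Finset.card_filter]
    simp only [Fintype.sum_prod_type]
    refine Finset.sum_congr rfl fun v _ => ?_
    unfold svF
    rw [← triple_count (Finset.univ.filter (fun j => G.Simple v j))]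
    refine Finset.sum_congr rfl fun a _ => Finset.sum_congr rfl fun b _ =>
      Finset.sum_congr rfl fun c _ => if_congr ?_ rfl rfl
    simp [Finset.mem_filter]
  -- degree decomposition
  have hdv : ∀ v : Fin n, d v = svF G v + (2 * bvF G v + 3 * tvF G v) := by
    intro v
    rw [← hdeg v]
    unfold Multigraph.deg svF bvF tvF
    rw [hnoloop v, mul_zero, zero_add, Finset.sum_filter, Finset.card_filter,
      Finset.card_filter, Finset.card_filter, Finset.mul_sum, Finset.mul_sum,
      ← Finset.sum_add_distrib, ← Finset.sum_add_distrib]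
    refine Finset.sum_congr rfl fun j _ => ?_
    by_cases h : j = v
    · subst h
      simp [Multigraph.Simple, hnoloop]
    · have h' : ¬ v = j := fun hh => h hh.symm
      have h4 : G.mult v j = 0 ∨ G.mult v j = 1 ∨ G.mult v j = 2 ∨ G.mult v j = 3 := by
        have := hmax v j h'; omega
      rcases h4 with h0|h0|h0|h0 <;> simp [Multigraph.Simple, h, h', h0]
  -- sum of triple-edge counts
  have ht : ∑ v : Fin n, tvF G v = 2 * mt := by
    rw [← htriple, Finset.card_filter, Fintype.sum_prod_type]
    refine Finset.sum_congr rfl fun v _ => ?_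
    unfold tvF
    exact Finset.card_filter _ _
  have hd2 : ∑ v : Fin n, bvF G v = 2 * md := by
    rw [← hdouble, Finset.card_filter, Fintype.sum_prod_type]
    refine Finset.sum_congr rfl fun v _ => ?_
    unfold bvF
    exact Finset.card_filter _ _
  -- max degree bound
  have hD : ∀ v : Fin n, d v ≤ D := by
    intro v
    have h0 : (0:ℕ) < n := lt_of_le_of_lt (Nat.zero_le _) v.2
    have : D = d ⟨0, h0⟩ := by rw [hDdef]; unfold dExt; rw [dif_pos h0]
    rw [this]
    exact hsorted ⟨0, h0⟩ v (by simp [Fin.le_def])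
  -- per-vertex bound
  have hper : ∀ v : Fin n, (d v).descFactorial 3
      ≤ (svF G v).descFactorial 3 + ((2 * bvF G v) * (3 * D^2) + (3 * tvF G v) * (3 * D^2)) := by
    intro v
    have h1 := desc3_diff (svF G v) (2 * bvF G v + 3 * tvF G v)
    rw [← hdv v] at h1
    have h2 : (d v)^2 ≤ D^2 := Nat.pow_le_pow_left (hD v) 2
    calc (d v).descFactorial 3
        ≤ (svF G v).descFactorial 3 + 3 * (2 * bvF G v + 3 * tvF G v) * (d v)^2 := h1
      _ ≤ (svF G v).descFactorial 3 + 3 * (2 * bvF G v + 3 * tvF G v) * D^2 := by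
          exact Nat.add_le_add_left (Nat.mul_le_mul_left _ h2) _
      _ = (svF G v).descFactorial 3 + ((2 * bvF G v) * (3 * D^2) + (3 * tvF G v) * (3 * D^2)) := by
          ring
  -- total bound in ℕ
  have htot : (∑ i : Fin n, (d i).descFactorial 3)
      ≤ (∑ v : Fin n, (svF G v).descFactorial 3) + (12 * md * D^2 + 18 * mt * D^2) := by
    calc (∑ i : Fin n, (d i).descFactorial 3)
        ≤ ∑ v : Fin n, ((svF G v).descFactorial 3
            + ((2 * bvF G v) * (3 * D^2) + (3 * tvF G v) * (3 * D^2))) :=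
          Finset.sum_le_sum fun v _ => hper v
      _ = (∑ v : Fin n, (svF G v).descFactorial 3)
            + ((2 * ∑ v : Fin n, bvF G v) * (3 * D^2) + (3 * ∑ v : Fin n, tvF G v) * (3 * D^2)) := by
          rw [Finset.sum_add_distrib, Finset.sum_add_distrib, ← Finset.sum_mul, ← Finset.sum_mul,
            ← Finset.mul_sum, ← Finset.mul_sum]
      _ = (∑ v : Fin n, (svF G v).descFactorial 3) + (12 * md * D^2 + 18 * mt * D^2) := by
          rw [ht, hd2]; ring
  rw [hstar]
  have := htot
  push_cast at this ⊢
  linarith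
end

section
/- Let d be a plib degree sequence with exponent γ > 2 and constant K. Then for every integer k ≥ 2 with k > γ - 1, the k-th factorial moment satisfies M_k = Σ_{i=1}^n [d_i]_k = O(n^{k/(γ-1)}), with the implicit constant depending only on K, γ, and k. -/
open Finset

/-- for a plib degree sequence with exponent `γ > 2` and any integer
`k ≥ 2` with `k > γ - 1`, the `k`-th factorial moment satisfies
`M_k = Σ_i [d_i]_k = O(n^{k/(γ-1)})`, with constant depending only on `K`, `γ`, `k`. -/
theorem stmt8 (K γ : ℝ) (k : ℕ) (hK : 0 < K) (hγ : 2 < γ)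
    (hk2 : 2 ≤ k) (hkγ : γ - 1 < (k : ℝ)) :
    ∃ C : ℝ, 0 < C ∧ ∀ (n : ℕ) (d : Fin n → ℕ), 0 < n →
      (∀ i j : Fin n, i ≤ j → d j ≤ d i) →
      (∀ i : Fin n, 1 ≤ d i) →
      (∀ i : ℕ, 1 ≤ i →
        ((Finset.univ.filter (fun j : Fin n => i ≤ d j)).card : ℝ)
          ≤ K * (n : ℝ) * (i : ℝ) ^ ((1 : ℝ) - γ)) →
      ((∑ i : Fin n, Nat.descFactorial (d i) k : ℕ) : ℝ)
        ≤ C * (n : ℝ) ^ ((k : ℝ) / (γ - 1)) := by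
  have hγ1 : (0:ℝ) < γ - 1 := by linarith
  set p : ℝ := (k : ℝ) / (γ - 1) with hp_def
  have hp1 : 1 < p := (one_lt_div hγ1).2 hkγ
  have hp0 : 0 < p := by linarith
  -- summable series
  have hsum : Summable (fun j : ℕ => (((j:ℝ)+1) ^ p)⁻¹) := by
    have h0 : Summable (fun j : ℕ => ((j:ℝ) ^ p)⁻¹) :=
      Real.summable_nat_rpow_inv.2 hp1
    have := (summable_nat_add_iff 1).2 h0
    simpa using this
  set S : ℝ := ∑' j : ℕ, (((j:ℝ)+1) ^ p)⁻¹ with hS_def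
  have hS0 : 0 ≤ S := tsum_nonneg fun j => by positivity
  refine ⟨K ^ p * S + 1, by positivity, ?_⟩
  intro n d hn hmono hd1 hplib
  have hn0 : (0:ℝ) < n := by exact_mod_cast hn
  -- pointwise bound : (d i : ℝ) ≤ (K*n/(i+1))^(1/(γ-1))
  have key : ∀ i : Fin n, ((d i : ℝ)) ≤ (K * n / ((i:ℝ)+1)) ^ (γ-1)⁻¹ := by
    intro i
    have hm1 : (1:ℝ) ≤ (d i : ℝ) := by exact_mod_cast hd1 i
    have hm0 : (0:ℝ) < (d i : ℝ) := by linarith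
    -- rank lower bound
    have hrank : ((i:ℕ)+1 : ℝ) ≤
        ((Finset.univ.filter (fun j : Fin n => d i ≤ d j)).card : ℝ) := by
      have hsub : Finset.Iic i ⊆ Finset.univ.filter (fun j : Fin n => d i ≤ d j) := by
        intro j hj
        simp only [Finset.mem_Iic] at hj
        simp only [Finset.mem_filter, Finset.mem_univ, true_and]
        exact hmono j i hj
      have := Finset.card_le_card hsub
      have hcard : (Finset.Iic i).card = (i:ℕ) + 1 := by
        simp [Fin.card_Iic]
      rw [hcard] at this
      exact_mod_cast this
    have hup := hplib (d i) (hd1 i)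
    have h1 : ((i:ℕ)+1 : ℝ) ≤ K * n * ((d i : ℝ)) ^ ((1:ℝ) - γ) :=
      le_trans hrank hup
    have hrw : ((d i : ℝ)) ^ ((1:ℝ) - γ) = (((d i : ℝ)) ^ (γ-1))⁻¹ := by
      rw [← Real.rpow_neg (le_of_lt hm0)]
      ring_nf
    rw [hrw] at h1
    have hpow0 : (0:ℝ) < ((d i : ℝ)) ^ (γ-1) := Real.rpow_pos_of_pos hm0 _
    have h2 : ((d i : ℝ)) ^ (γ-1) ≤ K * n / ((i:ℕ)+1 : ℝ) := by
      rw [le_div_iff₀ (by positivity)]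
      calc ((d i : ℝ)) ^ (γ-1) * ((i:ℕ)+1 : ℝ)
          ≤ ((d i : ℝ)) ^ (γ-1) * (K * n * (((d i : ℝ)) ^ (γ-1))⁻¹) := by
            exact mul_le_mul_of_nonneg_left h1 (le_of_lt hpow0)
        _ = K * n := by field_simp
    have h3 := Real.rpow_le_rpow (le_of_lt hpow0) h2 (by positivity : (0:ℝ) ≤ (γ-1)⁻¹)
    rwa [Real.rpow_rpow_inv (le_of_lt hm0) (ne_of_gt hγ1)] at h3
  -- main chain
  have step1 : ((∑ i : Fin n, Nat.descFactorial (d i) k : ℕ) : ℝ)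
      ≤ ∑ i : Fin n, (K * n / ((i:ℝ)+1)) ^ p := by
    push_cast
    apply Finset.sum_le_sum
    intro i _
    have h1 : ((Nat.descFactorial (d i) k : ℕ) : ℝ) ≤ ((d i : ℝ)) ^ k := by
      exact_mod_cast Nat.descFactorial_le_pow (d i) k
    refine h1.trans ?_
    have hbase : (0:ℝ) ≤ (d i : ℝ) := Nat.cast_nonneg _
    have h2 : ((d i : ℝ)) ^ k ≤ ((K * n / ((i:ℝ)+1)) ^ (γ-1)⁻¹) ^ k :=
      pow_le_pow_left₀ hbase (key i) k
    refine h2.trans_eq ?_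
    have hb0 : (0:ℝ) ≤ K * n / ((i:ℝ)+1) := by positivity
    rw [← Real.rpow_natCast ((K * n / ((i:ℝ)+1)) ^ (γ-1)⁻¹) k,
      ← Real.rpow_mul hb0]
    congr 1
    rw [hp_def]
    field_simp
  have step2 : ∑ i : Fin n, (K * n / ((i:ℝ)+1)) ^ p
      ≤ (K * n) ^ p * S := by
    have heach : ∀ i : Fin n, (K * n / ((i:ℝ)+1)) ^ p
        = (K * n) ^ p * ((((i:ℕ):ℝ)+1) ^ p)⁻¹ := by
      intro i
      rw [Real.div_rpow (by positivity) (by positivity), div_eq_mul_inv]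
    rw [Finset.sum_congr rfl (fun i _ => heach i), ← Finset.mul_sum]
    apply mul_le_mul_of_nonneg_left _ (by positivity)
    rw [Fin.sum_univ_eq_sum_range (fun j => (((j:ℝ)+1) ^ p)⁻¹) n]
    exact Summable.sum_le_tsum _ (fun j _ => by positivity) hsum
  have step3 : (K * n) ^ p * S ≤ (K ^ p * S + 1) * (n:ℝ) ^ p := by
    rw [Real.mul_rpow (le_of_lt hK) (le_of_lt hn0)]
    have hnp : (0:ℝ) ≤ (n:ℝ) ^ p := by positivity
    nlinarith [Real.rpow_nonneg (le_of_lt hK) p]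
  linarith [step1, step2, step3]
end

section
/- Fix integers m ≥ 1, and nonnegative reals (or integers) d_i, d_j, W_{i,j}, W_{j,i}, Y_1 ≤ h, Y_2 ≤ h with Y_1 ≤ d_i - W_{i,j} and Y_2 ≤ d_j - W_{j,i}. Then the inclusion-exclusion sum b = Σ_{l=0}^m (-1)^l · C(m,l) · [Y_1]_l · [Y_2]_l · [d_i - W_{i,j} - l]_{m-l} · [d_j - W_{j,i} - l]_{m-l} satisfies b ≥ [d_i - W_{i,j}]_m · [d_j - W_{j,i}]_m - m·h²·[d_i - W_{i,j}]_{m-1}·[d_j - W_{j,i}]_{m-1}, i.e., the lower bound b̲_hm used in Phase 1 of Inc-Powerlaw is indeed a lower bound for b_hm whenever b counts a nonnegative quantity dominated termwise as above. -/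
/-!
Let `A = d_i - W_{i,j}` and `B = d_j - W_{j,i}`, and fix sets `P ⊆ Fin A`, `Q ⊆ Fin B` of sizes
`Y₁`, `Y₂`. Call a position `i < m` a joint hit of a pair of injections `(f, g) : Fin m ↪ Fin A,
Fin m ↪ Fin B` if `f i ∈ P` and `g i ∈ Q`. The pairs for which every position of a given `l`-set is
a joint hit number `[Y₁]_l [A - l]_{m-l} · [Y₂]_l [B - l]_{m-l}`, so by inclusion–exclusion the
alternating sum `b_hm` counts the pairs without joint hits. The union bound shows that this count
is at least `[A]_m [B]_m` minus the number of (pair, joint hit) incidences, which is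
`m · Y₁ [A-1]_{m-1} · Y₂ [B-1]_{m-1} ≤ m h² [A]_{m-1} [B]_{m-1}`.
-/

open Finset

section

variable {α β γ ι : Type*} [Fintype α] [Fintype β] [Fintype γ]
  [DecidableEq α] [DecidableEq β] [DecidableEq γ]

theorem Fintype.card_embedding_mapsTo (L : Finset α) (S : Finset β) :
    Fintype.card {f : α ↪ β // ∀ a ∈ L, f a ∈ S}
      = (#S).descFactorial #L * (Fintype.card β - #L).descFactorial (Fintype.card α - #L) := by
  -- an embedding of `α = L ⊕ Lᶜ` is one of `L` plus one of `Lᶜ` avoiding the first one's range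
  let e₀ : (α ↪ β) ≃ Σ f : L ↪ β, ({a // a ∉ L} ↪ ↥(Set.range f)ᶜ) :=
    (Equiv.embeddingCongr (Equiv.sumCompl (· ∈ L)).symm (Equiv.refl β)).trans
      Equiv.sumEmbeddingEquivSigmaEmbeddingRestricted
  let e : {f : α ↪ β // ∀ a ∈ L, f a ∈ S} ≃
      Σ f : {f : L ↪ β // ∀ a, f a ∈ S}, ({a // a ∉ L} ↪ ↥(Set.range f.1)ᶜ) :=
    (e₀.subtypeEquiv (q := fun p => ∀ a, p.1 a ∈ S) fun f =>
      ⟨fun h a => h a.1 a.2, fun h a ha => h ⟨a, ha⟩⟩).trans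
      (Equiv.subtypeSigmaEquiv (fun f : L ↪ β => {a // a ∉ L} ↪ ↥(Set.range f)ᶜ)
        (fun f => ∀ a, f a ∈ S))
  have hrestricted : Fintype.card {f : L ↪ β // ∀ a, f a ∈ S} = (#S).descFactorial #L := by
    simpa using Fintype.card_congr (Equiv.codRestrict L (S : Set β))
  have hextensions (f : {f : L ↪ β // ∀ a, f a ∈ S}) :
      Fintype.card ({a // a ∉ L} ↪ ↥(Set.range f.1)ᶜ)
        = (Fintype.card β - #L).descFactorial (Fintype.card α - #L) := by
    rw [Fintype.card_embedding_eq, Fintype.card_compl_set,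
      Set.card_range_of_injective f.1.injective, Fintype.card_subtype_compl, Fintype.card_coe]
  simp only [Fintype.card_congr e, Fintype.card_sigma, hextensions, sum_const, card_univ,
    hrestricted, smul_eq_mul]

theorem Finset.card_sub_sum_card_le_card_inf_compl (s : Finset ι) (S : ι → Finset α) :
    (Fintype.card α : ℤ) - ∑ i ∈ s, (#(S i) : ℤ) ≤ #(s.inf fun i ↦ (S i)ᶜ) := by
  rw [← Finset.compl_sup, card_compl, Nat.cast_sub (card_le_univ _), sup_eq_biUnion]
  gcongr
  exact_mod_cast card_biUnion_le

noncomputable def jointHits (P : Finset β) (Q : Finset γ) (i : α) :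
    Finset ((α ↪ β) × (α ↪ γ)) :=
  {x | x.1 i ∈ P ∧ x.2 i ∈ Q}

theorem card_inf_jointHits (P : Finset β) (Q : Finset γ) (t : Finset α) :
    #(t.inf (jointHits P Q)) =
      (#P).descFactorial #t * (Fintype.card β - #t).descFactorial (Fintype.card α - #t) *
        ((#Q).descFactorial #t * (Fintype.card γ - #t).descFactorial (Fintype.card α - #t)) := by
  have hmem (x : (α ↪ β) × (α ↪ γ)) :
      x ∈ t.inf (jointHits P Q) ↔ (∀ i ∈ t, x.1 i ∈ P) ∧ ∀ i ∈ t, x.2 i ∈ Q := by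
    simp only [mem_inf, jointHits, mem_filter, mem_univ, true_and]
    exact ⟨fun h => ⟨fun i hi => (h i hi).1, fun i hi => (h i hi).2⟩,
      fun h i hi => ⟨h.1 i hi, h.2 i hi⟩⟩
  rw [← Fintype.card_coe, Fintype.card_congr ((Equiv.subtypeEquivRight hmem).trans
    (Equiv.subtypeProdEquivProd (p := fun f : α ↪ β => ∀ i ∈ t, f i ∈ P)
      (q := fun g : α ↪ γ => ∀ i ∈ t, g i ∈ Q))), Fintype.card_prod,
    Fintype.card_embedding_mapsTo, Fintype.card_embedding_mapsTo]

theorem card_jointHits (P : Finset β) (Q : Finset γ) (i : α) :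
    #(jointHits P Q i) =
      #P * (Fintype.card β - 1).descFactorial (Fintype.card α - 1) *
        (#Q * (Fintype.card γ - 1).descFactorial (Fintype.card α - 1)) := by
  simpa using card_inf_jointHits P Q {i}

theorem card_inf_compl_jointHits (P : Finset β) (Q : Finset γ) :
    (#(univ.inf fun i : α ↦ (jointHits P Q i)ᶜ) : ℤ) =
      ∑ l ∈ range (Fintype.card α + 1), (-1 : ℤ) ^ l * ((Fintype.card α).choose l : ℤ)
        * ((#P).descFactorial l : ℤ) * ((#Q).descFactorial l : ℤ)
        * ((Fintype.card β - l).descFactorial (Fintype.card α - l) : ℤ)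
        * ((Fintype.card γ - l).descFactorial (Fintype.card α - l) : ℤ) := by
  rw [inclusion_exclusion_card_inf_compl]
  simp_rw [card_inf_jointHits]
  rw [sum_powerset_apply_card fun k ↦ (-1 : ℤ) ^ k *
    (((#P).descFactorial k * (Fintype.card β - k).descFactorial (Fintype.card α - k) *
      ((#Q).descFactorial k * (Fintype.card γ - k).descFactorial (Fintype.card α - k)) : ℕ) : ℤ),
    card_univ]
  refine sum_congr rfl fun l _ => ?_
  push_cast
  ring

end

theorem stmt10_general (m : ℕ) (di dj Wij Wji Y1 Y2 h : ℕ)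
    (hY1h : Y1 ≤ h) (hY2h : Y2 ≤ h)
    (hY1 : Y1 ≤ di - Wij) (hY2 : Y2 ≤ dj - Wji) :
    ((Nat.descFactorial (di - Wij) m : ℤ) * (Nat.descFactorial (dj - Wji) m : ℤ))
      - (m : ℤ) * (h : ℤ) ^ 2 * (Nat.descFactorial (di - Wij) (m - 1) : ℤ)
          * (Nat.descFactorial (dj - Wji) (m - 1) : ℤ)
    ≤ ∑ l ∈ Finset.range (m + 1),
        (-1 : ℤ) ^ l * (Nat.choose m l : ℤ)
          * (Nat.descFactorial Y1 l : ℤ) * (Nat.descFactorial Y2 l : ℤ)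
          * (Nat.descFactorial (di - Wij - l) (m - l) : ℤ)
          * (Nat.descFactorial (dj - Wji - l) (m - l) : ℤ) := by
  obtain ⟨P, -, hP⟩ := exists_subset_card_eq (s := (univ : Finset (Fin (di - Wij))))
    (by simpa using hY1)
  obtain ⟨Q, -, hQ⟩ := exists_subset_card_eq (s := (univ : Finset (Fin (dj - Wji))))
    (by simpa using hY2)
  have hcount := card_inf_compl_jointHits (α := Fin m) P Q
  simp only [Fintype.card_fin, hP, hQ] at hcount
  rw [← hcount]
  refine le_trans ?_ (card_sub_sum_card_le_card_inf_compl univ _)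
  simp only [card_jointHits, Fintype.card_fin, hP, hQ, Fintype.card_prod,
    Fintype.card_embedding_eq, sum_const, card_univ, nsmul_eq_mul]
  have hhits : Y1 * (di - Wij - 1).descFactorial (m - 1) * (Y2 * (dj - Wji - 1).descFactorial (m - 1))
      ≤ h * (di - Wij).descFactorial (m - 1) * (h * (dj - Wji).descFactorial (m - 1)) :=
    Nat.mul_le_mul (Nat.mul_le_mul hY1h (Nat.descFactorial_le _ (Nat.sub_le _ 1)))
      (Nat.mul_le_mul hY2h (Nat.descFactorial_le _ (Nat.sub_le _ 1)))
  have := mul_le_mul_of_nonneg_left (Nat.cast_le (α := ℤ).2 hhits) (Nat.cast_nonneg m)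
  push_cast at this ⊢
  linarith

/-- the Phase-1 lower bound `b̲_hm` is at most the inclusion-exclusion
sum `b_hm`. Here `[x]_k` is `Nat.descFactorial x k`. -/
theorem stmt10 (m : ℕ) (hm : 1 ≤ m) (di dj Wij Wji Y1 Y2 h : ℕ)
    (hW1 : Wij ≤ di) (hW2 : Wji ≤ dj)
    (hY1h : Y1 ≤ h) (hY2h : Y2 ≤ h)
    (hY1 : Y1 ≤ di - Wij) (hY2 : Y2 ≤ dj - Wji) :
    ((Nat.descFactorial (di - Wij) m : ℤ) * (Nat.descFactorial (dj - Wji) m : ℤ))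
      - (m : ℤ) * (h : ℤ) ^ 2 * (Nat.descFactorial (di - Wij) (m - 1) : ℤ)
          * (Nat.descFactorial (dj - Wji) (m - 1) : ℤ)
    ≤ ∑ l ∈ Finset.range (m + 1),
        (-1 : ℤ) ^ l * (Nat.choose m l : ℤ)
          * (Nat.descFactorial Y1 l : ℤ) * (Nat.descFactorial Y2 l : ℤ)
          * (Nat.descFactorial (di - Wij - l) (m - l) : ℤ)
          * (Nat.descFactorial (dj - Wji - l) (m - l) : ℤ) :=
  stmt10_general m di dj Wij Wji Y1 Y2 h hY1h hY2h hY1 hY2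
end

section
/- Let G be a multigraph realizing degree sequence d with m_t light triple-edges, m_d light double-edges, and no other non-simple edges. Fix a triplet together with i-1 previously chosen pairs (a set of 8 + 2(i-1) nodes, for some 1 ≤ i ≤ k). Then the number of simple ordered pairs in G that (a) share no nodes with the triplet or the previous i-1 pairs, and (b) avoid two designated forbidden adjacencies (each endpoint must be non-adjacent to one designated node of the triplet), is at least M_1 - 6·m_t - 4·m_d - 16·d_1 - 4·(i-1)·d_1 - 2·A_2. -/
open Finset

lemma auxLe (kk : ℕ) (f : Fin kk → ℕ) (hf : StrictMono f) : ∀ i : Fin kk, i.val ≤ f i := by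
  have key : ∀ m, ∀ i : Fin kk, i.val = m → m ≤ f i := by
    intro m
    induction m with
    | zero => exact fun _ _ => Nat.zero_le _
    | succ m ih =>
      intro ii hi
      have hmk : m < kk := by omega
      have hlt : (⟨m, hmk⟩ : Fin kk) < ii := by
        simp only [Fin.lt_def]; omega
      have h1 := hf hlt
      have h2 := ih ⟨m, hmk⟩ rfl
      omega
  exact fun i => key i.val i rfl

lemma sumTop (n : ℕ) (d : Fin n → ℕ) (hsorted : ∀ a b : Fin n, a ≤ b → d b ≤ d a)
    (A : Finset (Fin n)) (m : ℕ) (hm : A.card ≤ m) :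
    ∑ a ∈ A, d a ≤ ∑ j ∈ Finset.range m, dExt n d j := by
  set e := A.orderEmbOfFin rfl with he
  have himg : Finset.image (fun j => e j) Finset.univ = A := by
    apply Finset.eq_of_subset_of_card_le
    · intro x hx
      simp only [Finset.mem_image] at hx
      obtain ⟨j, _, rfl⟩ := hx
      exact A.orderEmbOfFin_mem rfl j
    · rw [Finset.card_image_of_injective _ (A.orderEmbOfFin rfl).injective]
      simp
  have h1 : ∑ a ∈ A, d a = ∑ j : Fin A.card, d (e j) := by
    conv_lhs => rw [← himg]
    rw [Finset.sum_image (fun x _ y _ hxy => (A.orderEmbOfFin rfl).injective hxy)]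
  have h2 : ∀ j : Fin A.card, d (e j) ≤ dExt n d j.val := by
    intro j
    have hle : j.val ≤ (e j).val := auxLe _ (fun j => (e j).val)
      (fun a b hab => (A.orderEmbOfFin rfl).strictMono hab) j
    have hjn : j.val < n := lt_of_le_of_lt hle (e j).isLt
    rw [dExt, dif_pos hjn]
    exact hsorted ⟨j.val, hjn⟩ (e j) hle
  calc ∑ a ∈ A, d a = ∑ j : Fin A.card, d (e j) := h1
    _ ≤ ∑ j : Fin A.card, dExt n d j.val := Finset.sum_le_sum (fun j _ => h2 j)
    _ = ∑ j ∈ Finset.range A.card, dExt n d j := Fin.sum_univ_eq_sum_range _ _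
    _ ≤ ∑ j ∈ Finset.range m, dExt n d j :=
        Finset.sum_le_sum_of_subset (Finset.range_subset_range.mpr hm)

/-- lower bound on the number of simple ordered pairs avoiding the
nodes of a fixed triplet plus `i-1` previous pairs (a set `S` of `8 + 2(i-1)` nodes)
and avoiding two designated forbidden adjacencies (to `w₁`, `w₂` in the triplet). -/
theorem stmt13 (n h mt md i k : ℕ) (G : Multigraph n) (d : Fin n → ℕ)
    (hdeg : ∀ j, G.deg j = d j)
    (hsorted : ∀ a b : Fin n, a ≤ b → d b ≤ d a)
    (hh1 : 1 ≤ h) (hhn : h ≤ n)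
    (htriple : (Finset.univ.filter (fun p : Fin n × Fin n =>
        p.1 ≠ p.2 ∧ G.mult p.1 p.2 = 3 ∧ (h ≤ p.1.val ∨ h ≤ p.2.val))).card = 2 * mt)
    (hdouble : (Finset.univ.filter (fun p : Fin n × Fin n =>
        p.1 ≠ p.2 ∧ G.mult p.1 p.2 = 2 ∧ (h ≤ p.1.val ∨ h ≤ p.2.val))).card = 2 * md)
    (hnoloop : ∀ a : Fin n, G.mult a a = 0)
    (hmax : ∀ a b : Fin n, a ≠ b → G.mult a b ≤ 3)
    (hmultilight : ∀ a b : Fin n, a ≠ b → 2 ≤ G.mult a b → (h ≤ a.val ∨ h ≤ b.val))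
    -- the triplet and the previous `i - 1` pairs, `1 ≤ i ≤ k`
    (hi1 : 1 ≤ i) (hik : i ≤ k)
    (S : Finset (Fin n)) (hS : S.card = 8 + 2 * (i - 1))
    (w1 w2 : Fin n) (hw1 : w1 ∈ S) (hw2 : w2 ∈ S) :
    ((∑ j : Fin n, d j : ℕ) : ℤ)
      - 6 * (mt : ℤ) - 4 * (md : ℤ)
      - 16 * (dExt n d 0 : ℤ)
      - 4 * ((i : ℤ) - 1) * (dExt n d 0 : ℤ)
      - 2 * ((∑ j ∈ Finset.range (dExt n d 0), dExt n d j : ℕ) : ℤ)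
    ≤ ((Finset.univ.filter (fun p : Fin n × Fin n =>
        G.Simple p.1 p.2 ∧ p.1 ∉ S ∧ p.2 ∉ S ∧
        G.mult p.1 w1 = 0 ∧ G.mult p.2 w2 = 0)).card : ℤ) := by
  have hn0 : 0 < n := lt_of_lt_of_le hh1 hhn
  set D := dExt n d 0 with hDdef
  have hD : D = d ⟨0, hn0⟩ := dif_pos hn0
  have hDtop : ∀ a : Fin n, d a ≤ D := by
    intro a
    rw [hD]
    exact hsorted ⟨0, hn0⟩ a (by simp [Fin.le_def])
  -- degree formula
  have hdeg' : ∀ a : Fin n, d a = ∑ b ∈ Finset.univ.filter (fun b => b ≠ a), G.mult a b := by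
    intro a
    rw [← hdeg a, Multigraph.deg, hnoloop a]
    simp
  -- fiber bounds
  have hfib1 : ∀ a : Fin n, (Finset.univ.filter (fun b => G.Simple a b)).card ≤ d a := by
    intro a
    have h1 : (Finset.univ.filter (fun b => G.Simple a b)).card
        = ∑ b ∈ Finset.univ.filter (fun b => G.Simple a b), G.mult a b := by
      rw [Finset.card_eq_sum_ones]
      exact Finset.sum_congr rfl (fun b hb => by
        simp only [Finset.mem_filter] at hb
        exact hb.2.2.symm)
    rw [h1, hdeg' a]
    apply Finset.sum_le_sum_of_subset
    intro b hb
    simp only [Finset.mem_filter, Finset.mem_univ, true_and] at hb ⊢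
    exact hb.1.symm
  have hfib2 : ∀ a : Fin n, (Finset.univ.filter (fun b => G.Simple b a)).card ≤ d a := by
    intro a
    have h1 : (Finset.univ.filter (fun b => G.Simple b a)).card
        = ∑ b ∈ Finset.univ.filter (fun b => G.Simple b a), G.mult a b := by
      rw [Finset.card_eq_sum_ones]
      exact Finset.sum_congr rfl (fun b hb => by
        simp only [Finset.mem_filter] at hb
        rw [G.symm a b]
        exact hb.2.2.symm)
    rw [h1, hdeg' a]
    apply Finset.sum_le_sum_of_subset
    intro b hb
    simp only [Finset.mem_filter, Finset.mem_univ, true_and] at hb ⊢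
    exact hb.1
  -- generic bad-set bounds
  have hbound1 : ∀ A : Finset (Fin n),
      (Finset.univ.filter (fun p : Fin n × Fin n => G.Simple p.1 p.2 ∧ p.1 ∈ A)).card
        ≤ ∑ a ∈ A, d a := by
    intro A
    have hsub : Finset.univ.filter (fun p : Fin n × Fin n => G.Simple p.1 p.2 ∧ p.1 ∈ A) ⊆
        A.biUnion (fun a =>
          (Finset.univ.filter (fun b => G.Simple a b)).image (fun b => (a, b))) := by
      intro p hp
      simp only [Finset.mem_filter, Finset.mem_univ, true_and] at hp
      simp only [Finset.mem_biUnion, Finset.mem_image, Finset.mem_filter, Finset.mem_univ,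
        true_and]
      exact ⟨p.1, hp.2, p.2, hp.1, rfl⟩
    calc (Finset.univ.filter (fun p : Fin n × Fin n => G.Simple p.1 p.2 ∧ p.1 ∈ A)).card
        ≤ (A.biUnion (fun a =>
          (Finset.univ.filter (fun b => G.Simple a b)).image (fun b => (a, b)))).card :=
          Finset.card_le_card hsub
      _ ≤ ∑ a ∈ A, ((Finset.univ.filter (fun b => G.Simple a b)).image
            (fun b => (a, b))).card := Finset.card_biUnion_le
      _ ≤ ∑ a ∈ A, d a := Finset.sum_le_sum (fun a _ =>
          le_trans Finset.card_image_le (hfib1 a))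
  have hbound2 : ∀ A : Finset (Fin n),
      (Finset.univ.filter (fun p : Fin n × Fin n => G.Simple p.1 p.2 ∧ p.2 ∈ A)).card
        ≤ ∑ a ∈ A, d a := by
    intro A
    have hsub : Finset.univ.filter (fun p : Fin n × Fin n => G.Simple p.1 p.2 ∧ p.2 ∈ A) ⊆
        A.biUnion (fun a =>
          (Finset.univ.filter (fun b => G.Simple b a)).image (fun b => (b, a))) := by
      intro p hp
      simp only [Finset.mem_filter, Finset.mem_univ, true_and] at hp
      simp only [Finset.mem_biUnion, Finset.mem_image, Finset.mem_filter, Finset.mem_univ,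
        true_and]
      exact ⟨p.2, hp.2, p.1, hp.1, rfl⟩
    calc (Finset.univ.filter (fun p : Fin n × Fin n => G.Simple p.1 p.2 ∧ p.2 ∈ A)).card
        ≤ (A.biUnion (fun a =>
          (Finset.univ.filter (fun b => G.Simple b a)).image (fun b => (b, a)))).card :=
          Finset.card_le_card hsub
      _ ≤ ∑ a ∈ A, ((Finset.univ.filter (fun b => G.Simple b a)).image
            (fun b => (b, a))).card := Finset.card_biUnion_le
      _ ≤ ∑ a ∈ A, d a := Finset.sum_le_sum (fun a _ =>
          le_trans Finset.card_image_le (hfib2 a))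
  -- neighbor sets
  set N1 := Finset.univ.filter (fun a : Fin n => G.mult a w1 ≠ 0) with hN1def
  set N2 := Finset.univ.filter (fun a : Fin n => G.mult a w2 ≠ 0) with hN2def
  have hNcard : ∀ (w : Fin n),
      (Finset.univ.filter (fun a : Fin n => G.mult a w ≠ 0)).card ≤ d w := by
    intro w
    have h1 : (Finset.univ.filter (fun a : Fin n => G.mult a w ≠ 0)).card
        = ∑ a ∈ Finset.univ.filter (fun a : Fin n => G.mult a w ≠ 0), 1 :=
      Finset.card_eq_sum_ones _
    rw [h1, hdeg' w]
    calc ∑ a ∈ Finset.univ.filter (fun a : Fin n => G.mult a w ≠ 0), 1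
        ≤ ∑ a ∈ Finset.univ.filter (fun a : Fin n => G.mult a w ≠ 0), G.mult w a :=
          Finset.sum_le_sum (fun a ha => by
            simp only [Finset.mem_filter] at ha
            rw [G.symm w a]
            omega)
      _ ≤ ∑ b ∈ Finset.univ.filter (fun b => b ≠ w), G.mult w b := by
          apply Finset.sum_le_sum_of_subset
          intro a ha
          simp only [Finset.mem_filter, Finset.mem_univ, true_and] at ha ⊢
          intro hEq
          rw [hEq, hnoloop w] at ha
          exact ha rfl
  -- the main sets
  set Q := Finset.univ.filter (fun p : Fin n × Fin n =>
      G.Simple p.1 p.2 ∧ p.1 ∉ S ∧ p.2 ∉ S ∧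
      G.mult p.1 w1 = 0 ∧ G.mult p.2 w2 = 0) with hQdef
  set T := Finset.univ.filter (fun p : Fin n × Fin n => G.Simple p.1 p.2) with hTdef
  set B1 := Finset.univ.filter (fun p : Fin n × Fin n => G.Simple p.1 p.2 ∧ p.1 ∈ S) with hB1def
  set B2 := Finset.univ.filter (fun p : Fin n × Fin n => G.Simple p.1 p.2 ∧ p.2 ∈ S) with hB2def
  set B3 := Finset.univ.filter (fun p : Fin n × Fin n => G.Simple p.1 p.2 ∧ p.1 ∈ N1) with hB3def
  set B4 := Finset.univ.filter (fun p : Fin n × Fin n => G.Simple p.1 p.2 ∧ p.2 ∈ N2) with hB4def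
  -- cover
  have hcoverset : T ⊆ Q ∪ B1 ∪ B2 ∪ B3 ∪ B4 := by
    intro p hp
    simp only [hTdef, Finset.mem_filter, Finset.mem_univ, true_and] at hp
    simp only [Finset.mem_union, hQdef, hB1def, hB2def, hB3def, hB4def, hN1def, hN2def,
      Finset.mem_filter, Finset.mem_univ, true_and]
    by_cases h1 : p.1 ∈ S
    · tauto
    by_cases h2 : p.2 ∈ S
    · tauto
    by_cases h3 : G.mult p.1 w1 = 0
    · by_cases h4 : G.mult p.2 w2 = 0
      · tauto
      · tauto
    · tauto
  have hcover : T.card ≤ Q.card + B1.card + B2.card + B3.card + B4.card := by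
    calc T.card ≤ (Q ∪ B1 ∪ B2 ∪ B3 ∪ B4).card := Finset.card_le_card hcoverset
      _ ≤ (Q ∪ B1 ∪ B2 ∪ B3).card + B4.card := Finset.card_union_le _ _
      _ ≤ (Q ∪ B1 ∪ B2).card + B3.card + B4.card := by
          have := Finset.card_union_le (Q ∪ B1 ∪ B2) B3; omega
      _ ≤ (Q ∪ B1).card + B2.card + B3.card + B4.card := by
          have := Finset.card_union_le (Q ∪ B1) B2; omega
      _ ≤ Q.card + B1.card + B2.card + B3.card + B4.card := by
          have := Finset.card_union_le Q B1; omega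
  -- bounds for B1, B2
  have hB1 : B1.card ≤ S.card * D := by
    calc B1.card ≤ ∑ a ∈ S, d a := hbound1 S
      _ ≤ ∑ _a ∈ S, D := Finset.sum_le_sum (fun a _ => hDtop a)
      _ = S.card * D := by rw [Finset.sum_const, smul_eq_mul]
  have hB2 : B2.card ≤ S.card * D := by
    calc B2.card ≤ ∑ a ∈ S, d a := hbound2 S
      _ ≤ ∑ _a ∈ S, D := Finset.sum_le_sum (fun a _ => hDtop a)
      _ = S.card * D := by rw [Finset.sum_const, smul_eq_mul]
  -- bounds for B3, B4
  have hB3 : B3.card ≤ ∑ j ∈ Finset.range D, dExt n d j := by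
    calc B3.card ≤ ∑ a ∈ N1, d a := hbound1 N1
      _ ≤ ∑ j ∈ Finset.range D, dExt n d j :=
          sumTop n d hsorted N1 D (le_trans (hNcard w1) (hDtop w1))
  have hB4 : B4.card ≤ ∑ j ∈ Finset.range D, dExt n d j := by
    calc B4.card ≤ ∑ a ∈ N2, d a := hbound2 N2
      _ ≤ ∑ j ∈ Finset.range D, dExt n d j :=
          sumTop n d hsorted N2 D (le_trans (hNcard w2) (hDtop w2))
  -- M1 identity
  set P := Finset.univ.filter (fun p : Fin n × Fin n => p.1 ≠ p.2) with hPdef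
  have hstep1 : ∑ j : Fin n, d j = ∑ p ∈ P, G.mult p.1 p.2 := by
    have hsum : ∑ p ∈ P, G.mult p.1 p.2
        = ∑ a : Fin n, ∑ b ∈ Finset.univ.filter (fun b => a ≠ b), G.mult a b := by
      rw [hPdef, Finset.sum_filter, Fintype.sum_prod_type]
      exact Finset.sum_congr rfl (fun a _ => (Finset.sum_filter _ _).symm)
    rw [hsum]
    apply Finset.sum_congr rfl
    intro a _
    rw [hdeg' a]
    apply Finset.sum_congr _ (fun _ _ => rfl)
    apply Finset.filter_congr
    intro b _
    simp [ne_comm]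
  have hsplit : ∑ p ∈ P, G.mult p.1 p.2
      = (P.filter (fun p => G.mult p.1 p.2 = 1)).card
        + 2 * (P.filter (fun p => G.mult p.1 p.2 = 2)).card
        + 3 * (P.filter (fun p => G.mult p.1 p.2 = 3)).card := by
    have hpt : ∀ p ∈ P, G.mult p.1 p.2
        = (if G.mult p.1 p.2 = 1 then 1 else 0) + (if G.mult p.1 p.2 = 2 then 2 else 0)
          + (if G.mult p.1 p.2 = 3 then 3 else 0) := by
      intro p hp
      simp only [hPdef, Finset.mem_filter] at hp
      have := hmax p.1 p.2 hp.2
      interval_cases hm : G.mult p.1 p.2 <;> simp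
    rw [Finset.sum_congr rfl hpt]
    rw [Finset.sum_add_distrib, Finset.sum_add_distrib]
    rw [← Finset.sum_filter, ← Finset.sum_filter, ← Finset.sum_filter,
      Finset.sum_const, Finset.sum_const, Finset.sum_const]
    simp only [smul_eq_mul]
    ring
  have hT1 : P.filter (fun p => G.mult p.1 p.2 = 1) = T := by
    rw [hPdef, hTdef, Finset.filter_filter]
    apply Finset.filter_congr
    intro p _
    simp [Multigraph.Simple]
  have hT2 : (P.filter (fun p => G.mult p.1 p.2 = 2)).card = 2 * md := by
    rw [← hdouble]
    congr 1
    rw [hPdef, Finset.filter_filter]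
    apply Finset.filter_congr
    intro p _
    constructor
    · rintro ⟨h1, h2⟩
      exact ⟨h1, h2, hmultilight p.1 p.2 h1 (by omega)⟩
    · rintro ⟨h1, h2, _⟩
      exact ⟨h1, h2⟩
  have hT3 : (P.filter (fun p => G.mult p.1 p.2 = 3)).card = 2 * mt := by
    rw [← htriple]
    congr 1
    rw [hPdef, Finset.filter_filter]
    apply Finset.filter_congr
    intro p _
    constructor
    · rintro ⟨h1, h2⟩
      exact ⟨h1, h2, hmultilight p.1 p.2 h1 (by omega)⟩
    · rintro ⟨h1, h2, _⟩
      exact ⟨h1, h2⟩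
  have hM1 : ∑ j : Fin n, d j = T.card + 4 * md + 6 * mt := by
    rw [hstep1, hsplit, hT1, hT2, hT3]; ring
  -- final arithmetic
  obtain ⟨i', rfl⟩ : ∃ i', i = i' + 1 := ⟨i - 1, by omega⟩
  have hS' : S.card = 8 + 2 * i' := by simpa using hS
  rw [hS'] at hB1 hB2
  have c1 : ((∑ j : Fin n, d j : ℕ) : ℤ) = (T.card : ℤ) + 4 * md + 6 * mt := by
    exact_mod_cast congrArg (Nat.cast : ℕ → ℤ) hM1
  have c2 : (T.card : ℤ) ≤ (Q.card : ℤ) + B1.card + B2.card + B3.card + B4.card := by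
    exact_mod_cast hcover
  have c3 : (B1.card : ℤ) ≤ (8 + 2 * (i' : ℤ)) * D := by exact_mod_cast hB1
  have c4 : (B2.card : ℤ) ≤ (8 + 2 * (i' : ℤ)) * D := by exact_mod_cast hB2
  have c5 : (B3.card : ℤ) ≤ ((∑ j ∈ Finset.range D, dExt n d j : ℕ) : ℤ) := by
    exact_mod_cast hB3
  have c6 : (B4.card : ℤ) ≤ ((∑ j ∈ Finset.range D, dExt n d j : ℕ) : ℤ) := by
    exact_mod_cast hB4
  push_cast
  push_cast at c1 c2 c3 c4 c5 c6
  linarith [c1, c2, c3, c4, c5, c6]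
end
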